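/- arXiv:2011.01744 — 5 statements merged into one kernel-verified Lean document; each statement's English description precedes it below -/
import Mathlib

section
/- The norm is multiplicative on ℍ[t,s]: for all P, Q ∈ ℍ[t,s], N(PQ) = N(P)·N(Q). -/
/-!
Coefficientwise conjugation makes `R[X]` a star ring whenever `R` is one, because `X` is
central. A self-adjoint polynomial has self-adjoint coefficients, so if self-adjoint elements
of `R` are central, so are those of `R[X]`. Self-adjoint quaternions are real, hence central;
applying this twice, `Q * conj2 Q` is central in `ℍ[t][s]`, and then
`(P Q) conj(P Q) = P (Q conj Q) conj P = (P conj P) (Q conj Q)`.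
-/

open Polynomial

/-- Coefficientwise quaternion conjugation of a univariate polynomial in ℍ[t]. -/
noncomputable def conj1 (Q : Polynomial (Quaternion ℝ)) : Polynomial (Quaternion ℝ) :=
  Q.sum fun n a => C (star a) * X ^ n

/-- Coefficientwise quaternion conjugation of a bivariate polynomial in ℍ[t][s]. -/
noncomputable def conj2 (Q : Polynomial (Polynomial (Quaternion ℝ))) :
    Polynomial (Polynomial (Quaternion ℝ)) :=
  Q.sum fun n a => C (conj1 a) * X ^ n

namespace Polynomial

variable {R : Type*}

theorem commute_of_coeff_commute [Semiring R] {p q : R[X]}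
    (h : ∀ i j, Commute (p.coeff i) (q.coeff j)) : Commute p q := by
  refine Polynomial.ext fun n => ?_
  rw [coeff_mul, coeff_mul, ← Finset.Nat.sum_antidiagonal_swap]
  exact Finset.sum_congr rfl fun x _ => (h x.2 x.1).eq

section StarRing

variable [Semiring R] [StarRing R]

noncomputable instance instStar : Star R[X] :=
  ⟨fun p => p.sum fun n a => C (star a) * X ^ n⟩

@[simp]
theorem coeff_star (p : R[X]) (n : ℕ) : (star p).coeff n = star (p.coeff n) := by
  change (p.sum fun n a => C (star a) * X ^ n).coeff n = _
  rw [sum_def, finsetSum_coeff]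
  simp only [coeff_C_mul_X_pow, Finset.sum_ite_eq, mem_support_iff]
  split_ifs with h
  · rfl
  · rw [notMem_support_iff.mp h, star_zero]

noncomputable instance instStarRing : StarRing R[X] where
  star_involutive p := ext fun n => by simp
  star_mul p q := ext fun n => by
    simp only [coeff_star, coeff_mul, star_sum, star_mul]
    rw [← Finset.Nat.sum_antidiagonal_swap]
    rfl
  star_add p q := ext fun n => by simp

theorem commute_of_isSelfAdjoint (hR : ∀ a : R, IsSelfAdjoint a → ∀ b, Commute a b) :
    ∀ p : R[X], IsSelfAdjoint p → ∀ q, Commute p q := fun p hp q =>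
  commute_of_coeff_commute fun i j =>
    hR _ (by rw [IsSelfAdjoint, ← coeff_star, hp.star_eq]) _

end StarRing

end Polynomial

theorem Quaternion.commute_of_isSelfAdjoint :
    ∀ a : Quaternion ℝ, IsSelfAdjoint a → ∀ b, Commute a b := by
  intro a ha b
  rw [Quaternion.star_eq_self.mp ha.star_eq]
  exact Quaternion.coe_commute _ _

theorem mul_mul_star_mul_of_commute {M : Type*} [Monoid M] [StarMul M] (p q : M)
    (h : Commute (q * star q) (star p)) :
    p * q * star (p * q) = p * star p * (q * star q) := by
  rw [star_mul, mul_assoc, ← mul_assoc q, h.eq]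
  simp only [mul_assoc]

theorem conj2_eq_star (Q : Polynomial (Polynomial (Quaternion ℝ))) : conj2 Q = star Q := rfl

/-- The norm N(Q) = Q·conj(Q) is multiplicative on ℍ[t,s]. -/
theorem norm_polynomial_mul (P Q : Polynomial (Polynomial (Quaternion ℝ))) :
    (P * Q) * conj2 (P * Q) = (P * conj2 P) * (Q * conj2 Q) := by
  have h_central := Polynomial.commute_of_isSelfAdjoint
    (Polynomial.commute_of_isSelfAdjoint Quaternion.commute_of_isSelfAdjoint)
  simp only [conj2_eq_star]
  exact mul_mul_star_mul_of_commute P Q (h_central _ (IsSelfAdjoint.mul_star_self Q) _)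
end

section
/- Let Q ∈ ℍ[t] be a monic univariate quaternionic polynomial with no nonconstant real polynomial factor, and let M ∈ ℝ[t] be a monic irreducible quadratic real polynomial dividing N(Q) with M ∤ Q (in ℂ[t]-coefficient sense). Then Q has a unique monic linear right factor t − h with N(t − h) = M; explicitly, if Q = TM + U with U = u₁t + u₀ the remainder of division by M, then u₁ ≠ 0 and h = −u₁⁻¹u₀. -/
open Polynomial

/-! Since `M` is real, it is central in `ℍ[t]` and fixed by conjugation, so from `Q = T M + U`
one gets `M ∣ U · conj U` for the linear remainder `U = u₁ t + u₀`. If `u₁ = 0` then `U · conj U`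
is a constant divisible by the quadratic `M`, hence `U = 0` and `M ∣ Q`. Otherwise
`U = u₁ (t - h)` with `h = -u₁⁻¹ u₀`, and `U · conj U = |u₁|² (t - h)(t - h̄)` is a real quadratic
divisible by `M`, so `M = (t - h)(t - h̄) = (t - h̄)(t - h)`. Then
`Q = (T (t - h̄) + u₁)(t - h)`, and any right factor `t - g` of `Q` with `N(t - g) = M` is a right
factor of `U = Q - T M`; evaluating `U` at `g` forces `g = h`. -/

namespace Polynomial

theorem commute_map_algebraMap {R A : Type*} [CommSemiring R] [Semiring A] [Algebra R A]
    (p : R[X]) (q : A[X]) : Commute (p.map (algebraMap R A)) q := by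
  induction p using Polynomial.induction_on' with
  | add p p' hp hp' => simpa only [Polynomial.map_add] using hp.add_left hp'
  | monomial n r =>
    rw [map_monomial, ← C_mul_X_pow_eq_monomial, ← Polynomial.algebraMap_apply]
    exact (Algebra.commute_algebraMap_left r q).mul_left (commute_X_pow q n)

theorem Monic.eq_mul_C_of_dvd_of_natDegree_le {R : Type*} [Semiring R] {p q : R[X]}
    (hp : p.Monic) (hdvd : p ∣ q) (hq : q.natDegree ≤ p.natDegree) :
    q = p * C (q.coeff p.natDegree) := by
  obtain ⟨w, rfl⟩ := hdvd
  rcases eq_or_ne w 0 with rfl | hw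
  · simp
  have hw₀ : w.natDegree = 0 := by rw [hp.natDegree_mul' hw] at hq; omega
  rw [eq_C_of_natDegree_eq_zero hw₀, coeff_mul_C, hp.coeff_natDegree, one_mul]

theorem X_sub_C_mul_X_sub_C {R : Type*} [Ring R] (a b : R) :
    (X - C a) * (X - C b) = X ^ 2 - C (a + b) * X + C (a * b) := by
  rw [sub_mul, mul_sub, mul_sub, X_mul_C, ← C_mul, sq, C_add, add_mul]
  abel

theorem C_mul_X_add_C_eq_C_mul_X_sub_C {D : Type*} [DivisionRing D] {u₁ : D} (u₀ : D)
    (hu₁ : u₁ ≠ 0) : C u₁ * X + C u₀ = C u₁ * (X - C (-u₁⁻¹ * u₀)) := by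
  rw [mul_sub, ← C_mul, ← mul_assoc, mul_neg, mul_inv_cancel₀ hu₁, neg_mul, one_mul, C_neg,
    sub_neg_eq_add]

theorem eq_of_C_mul_X_sub_C_eq_mul_X_sub_C {D : Type*} [DivisionRing D] {u a b : D}
    {W : D[X]} (hu : u ≠ 0) (h : C u * (X - C a) = W * (X - C b)) : a = b := by
  have hb := congrArg (eval b) h
  rw [eval_mul_X_sub_C, eval_C_mul, eval_sub, eval_X, eval_C, mul_eq_zero] at hb
  exact (sub_eq_zero.mp (hb.resolve_left hu)).symm

end Polynomial

namespace Quaternion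

variable {R : Type*} [CommRing R]

theorem X_sub_C_mul_X_sub_C_star (a : ℍ[R]) :
    (X - C a) * (X - C (star a)) =
      (X ^ 2 - C (2 * a.re) * X + C (normSq a)).map (algebraMap R ℍ[R]) := by
  rw [X_sub_C_mul_X_sub_C, self_add_star', self_mul_star]
  simp

theorem X_sub_C_mul_X_sub_C_star_comm (a : ℍ[R]) :
    (X - C a) * (X - C (star a)) = (X - C (star a)) * (X - C a) := by
  have h := X_sub_C_mul_X_sub_C_star (star a)
  rw [star_star, re_star, normSq_star] at h
  rw [X_sub_C_mul_X_sub_C_star, h]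

end Quaternion

theorem coeff_conj1 (Q : Polynomial (Quaternion ℝ)) (n : ℕ) :
    (conj1 Q).coeff n = star (Q.coeff n) := by
  rw [conj1, Polynomial.sum, finsetSum_coeff]
  simp only [coeff_C_mul_X_pow]
  rw [Finset.sum_ite_eq]
  split_ifs with h
  · rfl
  · rw [notMem_support_iff.mp h, star_zero]

theorem conj1_add (P Q : Polynomial (Quaternion ℝ)) : conj1 (P + Q) = conj1 P + conj1 Q := by
  ext n : 1
  simp [coeff_conj1]

theorem conj1_mul (P Q : Polynomial (Quaternion ℝ)) : conj1 (P * Q) = conj1 Q * conj1 P := by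
  ext n : 1
  rw [coeff_conj1, coeff_mul, coeff_mul, star_sum, ← Finset.Nat.sum_antidiagonal_swap]
  simp [coeff_conj1]

theorem conj1_map_algebraMap (M : ℝ[X]) :
    conj1 (M.map (algebraMap ℝ (Quaternion ℝ))) = M.map (algebraMap ℝ (Quaternion ℝ)) := by
  ext n : 1
  simp [coeff_conj1]

theorem conj1_C (a : Quaternion ℝ) : conj1 (C a) = C (star a) := by
  ext n : 1
  rw [coeff_conj1, coeff_C, coeff_C]
  split_ifs
  · rfl
  · exact star_zero _

theorem conj1_X_sub_C (a : Quaternion ℝ) : conj1 (X - C a) = X - C (star a) := by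
  ext n : 1
  rw [coeff_conj1, coeff_sub, coeff_sub, coeff_X, coeff_C, coeff_C, star_sub]
  split_ifs <;> simp

theorem dvd_mul_conj1_of_eq_mul_add {M : ℝ[X]} {Q T U : Polynomial (Quaternion ℝ)}
    (hQ : Q = T * M.map (algebraMap ℝ (Quaternion ℝ)) + U)
    (hdvd : M.map (algebraMap ℝ (Quaternion ℝ)) ∣ Q * conj1 Q) :
    M.map (algebraMap ℝ (Quaternion ℝ)) ∣ U * conj1 U := by
  set M' := M.map (algebraMap ℝ (Quaternion ℝ))
  have hconj : conj1 Q = M' * conj1 T + conj1 U := by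
    rw [hQ, conj1_add, conj1_mul, conj1_map_algebraMap]
  have hsplit : Q * conj1 Q = U * conj1 U + M' * (T * conj1 Q + U * conj1 T) := by
    calc Q * conj1 Q = T * M' * conj1 Q + U * (M' * conj1 T + conj1 U) := by
          rw [← hconj, ← add_mul, ← hQ]
      _ = U * conj1 U + M' * (T * conj1 Q + U * conj1 T) := by
          rw [(commute_map_algebraMap M T).symm.eq, mul_add, mul_add, ← mul_assoc U,
            (commute_map_algebraMap M U).symm.eq]
          noncomm_ring
  rw [hsplit] at hdvd
  exact (dvd_add_left (dvd_mul_right _ _)).mp hdvd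

theorem map_eq_X_sub_C_mul_X_sub_C_star_of_dvd {M : ℝ[X]}
    (hM : (M.map (algebraMap ℝ (Quaternion ℝ))).Monic)
    (hdeg : (M.map (algebraMap ℝ (Quaternion ℝ))).natDegree = 2) {u a : Quaternion ℝ}
    (hu : u ≠ 0)
    (hdvd : M.map (algebraMap ℝ (Quaternion ℝ)) ∣ C u * (X - C a) * conj1 (C u * (X - C a))) :
    M.map (algebraMap ℝ (Quaternion ℝ)) = (X - C a) * (X - C (star a)) := by
  set P := (X - C a) * (X - C (star a)) with hP
  have hPmonic : P.Monic := (monic_X_sub_C a).mul (monic_X_sub_C _)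
  have hPdeg : P.natDegree = 2 := by
    rw [hP, (monic_X_sub_C a).natDegree_mul (monic_X_sub_C _), natDegree_X_sub_C,
      natDegree_X_sub_C]
  have hPu : Commute P (C u) := by
    rw [hP, Quaternion.X_sub_C_mul_X_sub_C_star]
    exact commute_map_algebraMap _ _
  have hnorm : C u * (X - C a) * conj1 (C u * (X - C a)) = P * C (u * star u) := by
    rw [conj1_mul, conj1_C, conj1_X_sub_C, mul_assoc, ← mul_assoc (X - C a), ← hP, ← mul_assoc,
      ← hPu.eq, mul_assoc, ← C_mul]
  rw [hnorm] at hdvd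
  have hPM := hM.eq_mul_C_of_dvd_of_natDegree_le hdvd
    ((natDegree_mul_C_le _ _).trans (hPdeg.trans hdeg.symm).le)
  rw [hdeg, coeff_mul_C, ← hPdeg, hPmonic.coeff_natDegree, one_mul] at hPM
  exact (mul_right_cancel₀ (C_ne_zero.mpr (mul_ne_zero hu (star_ne_zero.mpr hu))) hPM).symm

theorem unique_linear_right_factor_general (Q T : Polynomial (Quaternion ℝ))
    (M : Polynomial ℝ) (u₀ u₁ : Quaternion ℝ)
    (hM : M.Monic) (hMdeg : M.degree = 2)
    (hMdvd : M.map (algebraMap ℝ (Quaternion ℝ)) ∣ Q * conj1 Q)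
    (hMndvd : ¬ M.map (algebraMap ℝ (Quaternion ℝ)) ∣ Q)
    (hdiv : Q = T * M.map (algebraMap ℝ (Quaternion ℝ)) + (C u₁ * X + C u₀)) :
    u₁ ≠ 0 ∧
    (∃ S, Q = S * (X - C (-u₁⁻¹ * u₀))) ∧
    M.map (algebraMap ℝ (Quaternion ℝ)) =
      (X - C (-u₁⁻¹ * u₀)) * (X - C (star (-u₁⁻¹ * u₀))) ∧
    ∀ h : Quaternion ℝ,
      ((∃ S, Q = S * (X - C h)) ∧
        M.map (algebraMap ℝ (Quaternion ℝ)) = (X - C h) * (X - C (star h))) →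
      h = -u₁⁻¹ * u₀ := by
  set M' := M.map (algebraMap ℝ (Quaternion ℝ))
  have hM'monic : M'.Monic := hM.map _
  have hM'deg : M'.natDegree = 2 := by
    rw [natDegree_map_eq_of_injective (algebraMap ℝ _).injective,
      natDegree_eq_of_degree_eq_some hMdeg]
  have hnorm := dvd_mul_conj1_of_eq_mul_add hdiv hMdvd
  have hu₁ : u₁ ≠ 0 := by
    rintro rfl
    rw [C_0, zero_mul, zero_add, conj1_C, ← C_mul] at hnorm
    have h0 := hM'monic.eq_mul_C_of_dvd_of_natDegree_le hnorm (by rw [natDegree_C]; omega)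
    rw [coeff_C, if_neg (by omega), C_0, mul_zero, C_eq_zero, mul_eq_zero, star_eq_zero,
      or_self] at h0
    refine hMndvd ⟨T, ?_⟩
    rw [hdiv, h0, C_0, zero_mul, add_zero, add_zero, (commute_map_algebraMap M T).eq]
  set a := -u₁⁻¹ * u₀
  have hU : C u₁ * X + C u₀ = C u₁ * (X - C a) := C_mul_X_add_C_eq_C_mul_X_sub_C u₀ hu₁
  rw [hU] at hdiv hnorm
  have hfactor : M' = (X - C a) * (X - C (star a)) :=
    map_eq_X_sub_C_mul_X_sub_C_star_of_dvd hM'monic hM'deg hu₁ hnorm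
  refine ⟨hu₁, ⟨T * (X - C (star a)) + C u₁, ?_⟩, hfactor, ?_⟩
  · rw [hdiv, hfactor, Quaternion.X_sub_C_mul_X_sub_C_star_comm, add_mul, mul_assoc]
  · rintro g ⟨⟨S, hS⟩, hg⟩
    have hU' : C u₁ * (X - C a) = (S - T * (X - C (star g))) * (X - C g) := by
      rw [sub_mul, mul_assoc, ← Quaternion.X_sub_C_mul_X_sub_C_star_comm, ← hg, ← hS, hdiv,
        add_sub_cancel_left]
    exact (eq_of_C_mul_X_sub_C_eq_mul_X_sub_C hu₁ hU').symm

/-- Let Q ∈ ℍ[t] be monic with no nonconstant real polynomial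
factor, M a monic irreducible quadratic real polynomial with M ∣ N(Q) but
M ∤ Q. Then Q has a unique monic linear right factor t − h with N(t − h) = M;
explicitly, if Q = T·M + (u₁t + u₀) is division with remainder by M, then
u₁ ≠ 0 and h = −u₁⁻¹u₀. -/
theorem unique_linear_right_factor (Q T : Polynomial (Quaternion ℝ))
    (M : Polynomial ℝ) (u₀ u₁ : Quaternion ℝ)
    (hmonic : Q.Monic)
    (hreal : ∀ r : Polynomial ℝ, r.map (algebraMap ℝ (Quaternion ℝ)) ∣ Q → r.degree ≤ 0)
    (hM : M.Monic) (hMirr : Irreducible M) (hMdeg : M.degree = 2)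
    (hMdvd : M.map (algebraMap ℝ (Quaternion ℝ)) ∣ Q * conj1 Q)
    (hMndvd : ¬ M.map (algebraMap ℝ (Quaternion ℝ)) ∣ Q)
    (hdiv : Q = T * M.map (algebraMap ℝ (Quaternion ℝ)) + (C u₁ * X + C u₀)) :
    u₁ ≠ 0 ∧
    (∃ S, Q = S * (X - C (-u₁⁻¹ * u₀))) ∧
    M.map (algebraMap ℝ (Quaternion ℝ)) =
      (X - C (-u₁⁻¹ * u₀)) * (X - C (star (-u₁⁻¹ * u₀))) ∧
    ∀ h : Quaternion ℝ,
      ((∃ S, Q = S * (X - C h)) ∧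
        M.map (algebraMap ℝ (Quaternion ℝ)) = (X - C h) * (X - C (star h))) →
      h = -u₁⁻¹ * u₀ :=
  unique_linear_right_factor_general Q T M u₀ u₁ hM hMdeg hMdvd hMndvd hdiv
end

section
/- For a point [h] on the null quadric (h ∈ ℂℍ \ {0} with N(h) = 0), the sets L_[h] = {[q] : q·conj(h) = 0} and R_[h] = {[q] : conj(h)·q = 0} are distinct; equivalently, there exists q ∈ ℂℍ \ {0} with q·conj(h) = 0 but conj(h)·q ≠ 0 (or vice versa), whenever h ≠ 0 and N(h) = 0. -/
open Quaternion

private def qI : Quaternion ℂ := ⟨0,1,0,0⟩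
private def qJ : Quaternion ℂ := ⟨0,0,1,0⟩
private def qK : Quaternion ℂ := ⟨0,0,0,1⟩
private def sc (c : ℂ) : Quaternion ℂ := ⟨c,0,0,0⟩

private lemma scalar_mul_eq_zero (c : ℂ) (x : Quaternion ℂ)
    (hcx : sc c * x = 0) : c = 0 ∨ x = 0 := by
  by_cases hc : c = 0
  · exact Or.inl hc
  refine Or.inr ?_
  have e1 : c * x.re = 0 := by
    have := congrArg QuaternionAlgebra.re hcx
    rw [Quaternion.re_mul] at this
    simpa [sc] using this
  have e2 : c * x.imI = 0 := by
    have := congrArg QuaternionAlgebra.imI hcx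
    rw [Quaternion.imI_mul] at this
    simpa [sc] using this
  have e3 : c * x.imJ = 0 := by
    have := congrArg QuaternionAlgebra.imJ hcx
    rw [Quaternion.imJ_mul] at this
    simpa [sc] using this
  have e4 : c * x.imK = 0 := by
    have := congrArg QuaternionAlgebra.imK hcx
    rw [Quaternion.imK_mul] at this
    simpa [sc] using this
  ext
  · simpa using (mul_eq_zero.mp e1).resolve_left hc
  · simpa using (mul_eq_zero.mp e2).resolve_left hc
  · simpa using (mul_eq_zero.mp e3).resolve_left hc
  · simpa using (mul_eq_zero.mp e4).resolve_left hc

private lemma unit_mul_ne_zero (u x : Quaternion ℂ) (hu : u * u = sc (-1)) (hx : x ≠ 0) :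
    u * x ≠ 0 := by
  intro hmul
  apply hx
  have h1 : u * (u * x) = u * 0 := by rw [hmul]
  rw [← mul_assoc, hu, mul_zero] at h1
  rcases scalar_mul_eq_zero _ _ h1 with h2 | h2
  · norm_num at h2
  · exact h2

private lemma qI_sq : qI * qI = sc (-1) := by
  ext <;> simp [Quaternion.re_mul, Quaternion.imI_mul, Quaternion.imJ_mul,
    Quaternion.imK_mul] <;> simp [qI, sc]

private lemma qJ_sq : qJ * qJ = sc (-1) := by
  ext <;> simp [Quaternion.re_mul, Quaternion.imI_mul, Quaternion.imJ_mul,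
    Quaternion.imK_mul] <;> simp [qJ, sc]

private lemma qK_sq : qK * qK = sc (-1) := by
  ext <;> simp [Quaternion.re_mul, Quaternion.imI_mul, Quaternion.imJ_mul,
    Quaternion.imK_mul] <;> simp [qK, sc]

private lemma extract_re (h : Quaternion ℂ) :
    h - qI*h*qI - qJ*h*qJ - qK*h*qK = sc (4*h.re) := by
  ext <;> simp [Quaternion.re_mul, Quaternion.imI_mul, Quaternion.imJ_mul,
    Quaternion.imK_mul] <;> simp [qI, qJ, qK, sc] <;> ring

private lemma extract_imI (h : Quaternion ℂ) :
    h - qI*h*qI + qJ*h*qJ + qK*h*qK = sc (4*h.imI) * qI := by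
  ext <;> simp [Quaternion.re_mul, Quaternion.imI_mul, Quaternion.imJ_mul,
    Quaternion.imK_mul] <;> simp [qI, qJ, qK, sc] <;> ring

private lemma extract_imJ (h : Quaternion ℂ) :
    h + qI*h*qI - qJ*h*qJ + qK*h*qK = sc (4*h.imJ) * qJ := by
  ext <;> simp [Quaternion.re_mul, Quaternion.imI_mul, Quaternion.imJ_mul,
    Quaternion.imK_mul] <;> simp [qI, qJ, qK, sc] <;> ring

private lemma extract_imK (h : Quaternion ℂ) :
    h + qI*h*qI + qJ*h*qJ - qK*h*qK = sc (4*h.imK) * qK := by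
  ext <;> simp [Quaternion.re_mul, Quaternion.imI_mul, Quaternion.imJ_mul,
    Quaternion.imK_mul] <;> simp [qI, qJ, qK, sc] <;> ring

/-- For a point [h] on the null quadric (h ≠ 0, N(h) = 0), the
left ruling {[q] : q·conj(h) = 0} and the right ruling {[q] : conj(h)·q = 0}
are distinct. -/
theorem left_ruling_ne_right_ruling (h : Quaternion ℂ) (h0 : h ≠ 0)
    (hn : Quaternion.normSq h = 0) :
    {q : Quaternion ℂ | q * star h = 0} ≠ {q : Quaternion ℂ | star h * q = 0} := by
  intro heq
  have hiff : ∀ q : Quaternion ℂ, q * star h = 0 ↔ star h * q = 0 := fun q =>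
    Set.ext_iff.mp heq q
  have hstar : star h ≠ 0 := star_ne_zero.mpr h0
  have hmem : h * star h = 0 := by
    rw [Quaternion.self_mul_star, hn]; simp
  -- the common set is a two-sided ideal
  have key : ∀ r s : Quaternion ℂ, (r * h * s) * star h = 0 := by
    intro r s
    have h1 : (r * h) * star h = 0 := by rw [mul_assoc, hmem, mul_zero]
    have h2 : star h * (r * h) = 0 := (hiff _).mp h1
    have h3 : star h * (r * h * s) = 0 := by rw [← mul_assoc, h2, zero_mul]
    exact (hiff _).mpr h3
  have k1 := key qI qI
  have k2 := key qJ qJ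
  have k3 := key qK qK
  have bre : sc (4*h.re) * star h = 0 := by
    rw [← extract_re]
    simp only [sub_mul]
    rw [hmem, k1, k2, k3]
    simp
  have bi : (sc (4*h.imI) * qI) * star h = 0 := by
    rw [← extract_imI]
    simp only [sub_mul, add_mul]
    rw [hmem, k1, k2, k3]
    simp
  have bj : (sc (4*h.imJ) * qJ) * star h = 0 := by
    rw [← extract_imJ]
    simp only [sub_mul, add_mul]
    rw [hmem, k1, k2, k3]
    simp
  have bk : (sc (4*h.imK) * qK) * star h = 0 := by
    rw [← extract_imK]
    simp only [sub_mul, add_mul]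
    rw [hmem, k1, k2, k3]
    simp
  rw [mul_assoc] at bi bj bk
  have h5 : (4 : ℂ) ≠ 0 := by norm_num
  have hre : h.re = 0 := by
    rcases scalar_mul_eq_zero _ _ bre with h4 | h4
    · exact (mul_eq_zero.mp h4).resolve_left h5
    · exact absurd h4 hstar
  have himi : h.imI = 0 := by
    rcases scalar_mul_eq_zero _ _ bi with h4 | h4
    · exact (mul_eq_zero.mp h4).resolve_left h5
    · exact absurd h4 (unit_mul_ne_zero qI (star h) qI_sq hstar)
  have himj : h.imJ = 0 := by
    rcases scalar_mul_eq_zero _ _ bj with h4 | h4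
    · exact (mul_eq_zero.mp h4).resolve_left h5
    · exact absurd h4 (unit_mul_ne_zero qJ (star h) qJ_sq hstar)
  have himk : h.imK = 0 := by
    rcases scalar_mul_eq_zero _ _ bk with h4 | h4
    · exact (mul_eq_zero.mp h4).resolve_left h5
    · exact absurd h4 (unit_mul_ne_zero qK (star h) qK_sq hstar)
  exact h0 (by ext <;> simp [hre, himi, himj, himk])
end

section
/- If h ∈ ℂℍ \ {0} satisfies N(h) = 0, then the solution set {q ∈ ℂℍ : q·conj(h) = 0} is a 2-dimensional complex subspace of ℂℍ (so L_[h] is a projective line containing [h]); the same holds for {q ∈ ℂℍ : conj(h)·q = 0}. -/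
instance : IsScalarTower ℂ (Quaternion ℂ) (Quaternion ℂ) := IsScalarTower.right (R := ℂ) (A := Quaternion ℂ)

instance : SMulCommClass ℂ (Quaternion ℂ) (Quaternion ℂ) := ⟨fun a x y => by ext <;> simp <;> ring⟩

/-!
A nonzero left ideal `ℍ[K] * s` is never a line `K ∙ s`: otherwise `i` and `j` would act on `s`
by commuting scalars although `j * i = -(i * j) = -k`, forcing `k * s = -(k * s)`, hence
`k * s = 0` and `s = 0` since `k` is a unit. For `h ≠ 0` with `normSq h = 0`, the ideal
`ℍ[K] * h` lies in the kernel of right multiplication by `star h`, because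
`h * star h = normSq h = 0`; rank–nullity in dimension `4` then pins both range and kernel to
dimension `2`. Conjugation carries the kernel of left multiplication by `a` onto that of right
multiplication by `star a`.
-/

open Module Submodule LinearMap

namespace Quaternion

section Field

variable {K : Type*} [Field K] [NeZero (2 : K)]

theorem eq_zero_of_forall_mul_mem_span_singleton {s : ℍ[K]} (hs : ∀ u : ℍ[K], u * s ∈ K ∙ s) :
    s = 0 := by
  let i : ℍ[K] := ⟨0, 1, 0, 0⟩
  let j : ℍ[K] := ⟨0, 0, 1, 0⟩
  let k : ℍ[K] := ⟨0, 0, 0, 1⟩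
  have ⟨hij, hji, hkk⟩ : i * j = k ∧ j * i = -k ∧ k * k = -1 := by
    refine ⟨?_, ?_, ?_⟩ <;> ext <;>
      simp only [re_mul, imI_mul, imJ_mul, imK_mul, re_neg, imI_neg, imJ_neg, imK_neg] <;>
      simp [i, j, k]
  obtain ⟨a, ha⟩ := mem_span_singleton.mp (hs i)
  obtain ⟨b, hb⟩ := mem_span_singleton.mp (hs j)
  have hks : k * s = -(k * s) := calc
    k * s = i * (j * s) := by rw [← mul_assoc, hij]
    _ = j * (i * s) := by rw [← hb, ← ha, mul_smul_comm, mul_smul_comm, ← ha, ← hb, smul_comm]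
    _ = -(k * s) := by rw [← mul_assoc, hji, neg_mul]
  have hks0 : k * s = 0 := by
    rwa [eq_neg_iff_add_eq_zero, ← two_smul K, smul_eq_zero, or_iff_right two_ne_zero] at hks
  calc s = -(k * (k * s)) := by rw [← mul_assoc, hkk, neg_one_mul, neg_neg]
    _ = 0 := by rw [hks0, mul_zero, neg_zero]

theorem two_le_finrank_range_mulRight {s : ℍ[K]} (hs : s ≠ 0) :
    2 ≤ finrank K (range (mulRight K s)) := by
  by_contra! hlt
  have hle : K ∙ s ≤ range (mulRight K s) :=
    (span_singleton_le_iff_mem _ _).mpr ⟨1, one_mul s⟩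
  have hline : K ∙ s = range (mulRight K s) :=
    eq_of_le_of_finrank_le hle (by rw [finrank_span_singleton hs]; omega)
  exact hs (eq_zero_of_forall_mul_mem_span_singleton fun u => hline ▸ ⟨u, rfl⟩)

theorem finrank_ker_mulRight_star {h : ℍ[K]} (h0 : h ≠ 0) (hn : normSq h = 0) :
    finrank K (ker (mulRight K (star h))) = 2 := by
  have hrank := finrank_range_add_finrank_ker (mulRight K (star h))
  have hle : range (mulRight K h) ≤ ker (mulRight K (star h)) := by
    rintro _ ⟨q, rfl⟩
    simp [mul_assoc, self_mul_star, hn]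
  have hker := (two_le_finrank_range_mulRight h0).trans (finrank_mono hle)
  have hrange := two_le_finrank_range_mulRight (star_ne_zero.mpr h0)
  rw [finrank_eq_four] at hrank
  omega

end Field

variable {R : Type*} [CommRing R]

def starLinearEquiv : ℍ[R] ≃ₗ[R] ℍ[R] where
  toFun := star
  invFun := star
  map_add' := star_add
  map_smul' := star_smul
  left_inv := star_star
  right_inv := star_star

theorem starLinearEquiv_symm_apply (x : ℍ[R]) : starLinearEquiv.symm x = star x := rfl

theorem map_starLinearEquiv_ker_mulLeft (a : ℍ[R]) :
    (ker (mulLeft R a)).map ((starLinearEquiv : ℍ[R] ≃ₗ[R] ℍ[R]) : ℍ[R] →ₗ[R] ℍ[R]) =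
      ker (mulRight R (star a)) := by
  ext q
  rw [map_equiv_eq_comap_symm, mem_comap, mem_ker, mem_ker, mulLeft_apply, mulRight_apply,
    ← star_eq_zero, star_mul, LinearEquiv.coe_coe, starLinearEquiv_symm_apply, star_star]

theorem finrank_ker_mulLeft (a : ℍ[R]) :
    finrank R (ker (mulLeft R a)) = finrank R (ker (mulRight R (star a))) := by
  rw [← map_starLinearEquiv_ker_mulLeft, LinearEquiv.finrank_map_eq]

end Quaternion

open Quaternion

/-- If h ∈ ℂℍ \ {0} has N(h) = 0, then {q : q·conj(h) = 0} is a
2-dimensional complex subspace of ℂℍ containing h (so L_[h] is a projective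
line through [h]); the same holds for {q : conj(h)·q = 0}. -/
theorem ruling_kernels_two_dimensional (h : Quaternion ℂ) (h0 : h ≠ 0)
    (hn : Quaternion.normSq h = 0) :
    Module.finrank ℂ (LinearMap.ker (LinearMap.mulRight ℂ (star h))) = 2 ∧
    Module.finrank ℂ (LinearMap.ker (LinearMap.mulLeft ℂ (star h))) = 2 ∧
    h ∈ LinearMap.ker (LinearMap.mulRight ℂ (star h)) := by
  refine ⟨finrank_ker_mulRight_star h0 hn, ?_, ?_⟩
  · rw [finrank_ker_mulLeft]
    exact finrank_ker_mulRight_star (star_ne_zero.mpr h0) (by rwa [normSq_star])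
  · simp [self_mul_star, hn]
end

section
/- Let Q = Q₀ + sQ₁ be a monic star-one-polynomial with gcd(Q) = 1, admitting two factorizations (t−h₁)···(t−hₙ)(s−h)(t−k₁)···(t−kₘ) = (t−h̄₁)···(t−h̄ₙ)(s−h̄)(t−k̄₁)···(t−k̄ₘ) such that N(t−hᵢ) = N(t−h̄ᵢ) for all i and N(t−kⱼ) = N(t−k̄ⱼ) for all j. Then h = h̄, (t−h₁)···(t−hₙ) = (t−h̄₁)···(t−h̄ₙ), and (t−k₁)···(t−kₘ) = (t−k̄₁)···(t−k̄ₘ). -/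
open Polynomial

/-- The embedding ℝ[t][s] → ℍ[t][s]. -/
noncomputable def toH : Polynomial (Polynomial ℝ) →+* Polynomial (Polynomial (Quaternion ℝ)) :=
  Polynomial.mapRingHom (Polynomial.mapRingHom (algebraMap ℝ (Quaternion ℝ)))

noncomputable section Aux


local notation "ℍ" => Quaternion ℝ
local notation "𝔻" => Polynomial (Quaternion ℝ)

def pconj (p : 𝔻) : 𝔻 := ⟨⟨p.toFinsupp.coeff.mapRange star (star_zero _)⟩⟩

@[simp] lemma coeff_pconj (p : 𝔻) (n : ℕ) : (pconj p).coeff n = star (p.coeff n) := rfl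

@[simp] lemma pconj_pconj (p : 𝔻) : pconj (pconj p) = p := by
  apply Polynomial.ext; intro n; simp

@[simp] lemma pconj_one : pconj (1 : 𝔻) = 1 := by
  apply Polynomial.ext; intro n; simp [coeff_one]; split <;> rfl

@[simp] lemma pconj_C (c : ℍ) : pconj (C c) = C (star c) := by
  apply Polynomial.ext; intro n; simp [coeff_C]; split <;> simp

@[simp] lemma pconj_X : pconj (X : 𝔻) = X := by
  apply Polynomial.ext; intro n; simp [coeff_X]; split <;> rfl

@[simp] lemma pconj_sub (p q : 𝔻) : pconj (p - q) = pconj p - pconj q := by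
  apply Polynomial.ext; intro n; simp

lemma pconj_mul (p q : 𝔻) : pconj (p * q) = pconj q * pconj p := by
  apply Polynomial.ext; intro n
  rw [coeff_pconj, coeff_mul, coeff_mul, star_sum, ← Finset.Nat.sum_antidiagonal_swap]
  exact Finset.sum_congr rfl fun x hx => by simp [star_mul]

lemma pconj_ne_zero {p : 𝔻} (hp : p ≠ 0) : pconj p ≠ 0 := by
  intro h
  apply hp
  apply Polynomial.ext; intro n
  have := congrArg (fun q => Polynomial.coeff q n) h
  simp only [coeff_pconj, coeff_zero] at this
  simpa using congrArg star this

@[simp] lemma support_pconj (p : 𝔻) : (pconj p).support = p.support := by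
  ext n; simp [mem_support_iff]

@[simp] lemma degree_pconj (p : 𝔻) : (pconj p).degree = p.degree := by
  unfold Polynomial.degree; rw [support_pconj]

@[simp] lemma natDegree_pconj (p : 𝔻) : (pconj p).natDegree = p.natDegree := by
  unfold Polynomial.natDegree; rw [degree_pconj]

@[simp] lemma leadingCoeff_pconj (p : 𝔻) : (pconj p).leadingCoeff = star p.leadingCoeff := by
  rw [leadingCoeff, leadingCoeff, natDegree_pconj, coeff_pconj]

/-- The embedding of real polynomials into quaternionic polynomials. -/
def rmap : Polynomial ℝ →+* 𝔻 := Polynomial.mapRingHom (algebraMap ℝ ℍ)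

@[simp] lemma coeff_rmap (r : Polynomial ℝ) (n : ℕ) :
    (rmap r).coeff n = algebraMap ℝ ℍ (r.coeff n) := by
  simp [rmap, coeff_map]

/-- Real polynomials are central in `𝔻`. -/
lemma rmap_comm (r : Polynomial ℝ) (q : 𝔻) : rmap r * q = q * rmap r := by
  apply Polynomial.ext; intro n
  rw [coeff_mul, coeff_mul, ← Finset.Nat.sum_antidiagonal_swap]
  exact Finset.sum_congr rfl fun x hx => by
    simp only [coeff_rmap]
    exact (Algebra.commutes _ _)

/-- A self-conjugate quaternionic polynomial is real. -/
lemma exists_real {p : 𝔻} (hp : pconj p = p) : ∃ r : Polynomial ℝ, rmap r = p := by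
  refine ⟨⟨⟨p.toFinsupp.coeff.mapRange QuaternionAlgebra.re rfl⟩⟩, ?_⟩
  apply Polynomial.ext; intro n
  have hco : (⟨⟨p.toFinsupp.coeff.mapRange QuaternionAlgebra.re rfl⟩⟩ : Polynomial ℝ).coeff n
      = (p.coeff n).re := rfl
  rw [coeff_rmap, hco]
  have hsc : star (p.coeff n) = p.coeff n := by
    have := congrArg (fun q => Polynomial.coeff q n) hp
    simpa using this
  rw [Quaternion.star_eq_self.mp hsc]
  rfl

lemma selfconj_comm {p : 𝔻} (hp : pconj p = p) (q : 𝔻) : p * q = q * p := by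
  obtain ⟨r, rfl⟩ := exists_real hp
  exact rmap_comm r q

lemma degree_mul_C' {p : 𝔻} {c : ℍ} (hc : c ≠ 0) : (p * C c).degree = p.degree := by
  unfold Polynomial.degree
  congr 1
  ext n
  simp [mem_support_iff, coeff_mul_C, hc]

lemma monic_mul_C_inv {p : 𝔻} (hp : p ≠ 0) : (p * C (p.leadingCoeff)⁻¹).Monic := by
  have hlc : p.leadingCoeff ≠ 0 := leadingCoeff_ne_zero.mpr hp
  have hdeg := degree_mul_C' (p := p) (inv_ne_zero hlc)
  have hnd : (p * C (p.leadingCoeff)⁻¹).natDegree = p.natDegree :=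
    natDegree_eq_of_degree_eq hdeg
  rw [Polynomial.Monic, Polynomial.leadingCoeff, hnd, coeff_mul_C,
    ← Polynomial.leadingCoeff, mul_inv_cancel₀ hlc]

/-- Every nonempty "right ideal"-like predicate on `𝔻` has a monic generator. -/
lemma exists_monic_gen (P : 𝔻 → Prop)
    (hsub : ∀ {f g}, P f → P g → P (f - g))
    (hmul : ∀ {f} (c : 𝔻), P f → P (f * c))
    {f₀ : 𝔻} (hf₀ : f₀ ≠ 0) (hPf₀ : P f₀) :
    ∃ w : 𝔻, w.Monic ∧ P w ∧ ∀ f, P f → ∃ c, f = w * c := by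
  set S : Set ℕ := {n | ∃ f : 𝔻, P f ∧ f ≠ 0 ∧ f.natDegree = n} with hS
  have hSne : S.Nonempty := ⟨f₀.natDegree, f₀, hPf₀, hf₀, rfl⟩
  obtain ⟨f₁, hPf₁, hf₁, hdeg₁⟩ := Nat.sInf_mem hSne
  set w : 𝔻 := f₁ * C (f₁.leadingCoeff)⁻¹ with hw
  have hwm : w.Monic := monic_mul_C_inv hf₁
  have hPw : P w := hmul _ hPf₁
  have hwdeg : w.natDegree = sInf S := by
    rw [← hdeg₁, hw]
    unfold Polynomial.natDegree
    rw [degree_mul_C' (inv_ne_zero (leadingCoeff_ne_zero.mpr hf₁))]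
  refine ⟨w, hwm, hPw, ?_⟩
  intro f hPf
  have key := modByMonic_add_div f w
  refine ⟨f /ₘ w, ?_⟩
  have hr : P (f %ₘ w) := by
    rw [eq_sub_of_add_eq key]
    exact hsub hPf (hmul _ hPw)
  by_cases h0 : f %ₘ w = 0
  · calc f = f %ₘ w + w * (f /ₘ w) := key.symm
      _ = w * (f /ₘ w) := by rw [h0, zero_add]
  · exfalso
    have hlt : (f %ₘ w).degree < w.degree := degree_modByMonic_lt f hwm
    have hltn : (f %ₘ w).natDegree < w.natDegree := natDegree_lt_natDegree h0 hlt
    have : w.natDegree ≤ (f %ₘ w).natDegree := by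
      rw [hwdeg]; exact Nat.sInf_le ⟨f %ₘ w, hr, h0, rfl⟩
    omega

lemma degree_mul_lt_helper {p x : 𝔻} {dp dx : ℕ} (hp : p.degree ≤ (dp : WithBot ℕ))
    (hx : x.degree < (dx : WithBot ℕ)) : (p * x).degree < ((dp + dx : ℕ) : WithBot ℕ) := by
  rcases eq_or_ne x 0 with rfl | hx0
  · rw [mul_zero, degree_zero]; exact WithBot.bot_lt_coe _
  rcases eq_or_ne p 0 with rfl | hp0
  · rw [zero_mul, degree_zero]; exact WithBot.bot_lt_coe _
  have h1 : (p * x).degree ≤ p.degree + x.degree := degree_mul_le _ _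
  rw [degree_eq_natDegree hx0] at hx
  rw [degree_eq_natDegree hp0] at hp
  have hx' : x.natDegree < dx := by exact_mod_cast hx
  have hp' : p.natDegree ≤ dp := by exact_mod_cast hp
  calc (p * x).degree ≤ p.degree + x.degree := h1
    _ = ((p.natDegree + x.natDegree : ℕ) : WithBot ℕ) := by
        rw [degree_eq_natDegree hp0, degree_eq_natDegree hx0]; exact_mod_cast rfl
    _ < ((dp + dx : ℕ) : WithBot ℕ) := by exact_mod_cast (by omega)

set_option maxHeartbeats 2000000 in
set_option synthInstance.maxHeartbeats 1000000 in
/-- If monic `u, v` are "coprime" (Bezout) then any nonzero common left multiple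
has degree at least `deg u + deg v`. -/
lemma lcm_deg {u v w s s' : 𝔻} (hu : u.Monic) (hv : v.Monic)
    (hbez : ∃ x y : 𝔻, u * x + v * y = 1) (hw : w ≠ 0)
    (hws : w = u * s) (hws' : w = v * s') :
    u.natDegree + v.natDegree ≤ w.natDegree := by
  by_contra hlt
  push_neg at hlt
  have hu0 : u ≠ 0 := hu.ne_zero
  have hv0 : v ≠ 0 := hv.ne_zero
  have hs0 : s ≠ 0 := by rintro rfl; rw [mul_zero] at hws; exact hw hws
  have hs'0 : s' ≠ 0 := by rintro rfl; rw [mul_zero] at hws'; exact hw hws'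
  set du := u.natDegree with hdu
  set dv := v.natDegree with hdv
  have hnds : w.natDegree = du + s.natDegree := by rw [hws, natDegree_mul hu0 hs0]
  have hnds' : w.natDegree = dv + s'.natDegree := by rw [hws', natDegree_mul hv0 hs'0]
  have hslt : s.natDegree < dv := by omega
  have hs'lt : s'.natDegree < du := by omega
  set M₁ := (degreeLT ℍ dv).restrictScalars ℝ with hM₁
  set M₂ := (degreeLT ℍ du).restrictScalars ℝ with hM₂
  set M₃ := (degreeLT ℍ (du + dv)).restrictScalars ℝ with hM₃
  have mem₃ : ∀ {x y : 𝔻}, x ∈ M₁ → y ∈ M₂ → u * x + v * y ∈ M₃ := by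
    intro x y hx hy
    rw [hM₁, Submodule.restrictScalars_mem, mem_degreeLT] at hx
    rw [hM₂, Submodule.restrictScalars_mem, mem_degreeLT] at hy
    rw [hM₃, Submodule.restrictScalars_mem, mem_degreeLT]
    refine lt_of_le_of_lt (degree_add_le _ _) (max_lt ?_ ?_)
    · exact_mod_cast degree_mul_lt_helper (p := u) (dp := du) degree_le_natDegree hx
    · have := degree_mul_lt_helper (p := v) (dp := dv) degree_le_natDegree hy
      rw [Nat.add_comm dv du] at this
      exact_mod_cast this
  set T : (M₁ × M₂) →ₗ[ℝ] M₃ := {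
    toFun := fun z => ⟨u * (z.1 : 𝔻) + v * (z.2 : 𝔻), mem₃ z.1.2 z.2.2⟩
    map_add' := by
      rintro ⟨⟨x, hx⟩, ⟨y, hy⟩⟩ ⟨⟨x', hx'⟩, ⟨y', hy'⟩⟩
      apply Subtype.ext
      simp only [Prod.fst_add, Prod.snd_add, AddSubmonoid.coe_add, Submodule.coe_toAddSubmonoid]
      push_cast
      noncomm_ring
    map_smul' := by
      rintro r ⟨⟨x, hx⟩, ⟨y, hy⟩⟩
      apply Subtype.ext
      simp only [Prod.smul_fst, Prod.smul_snd, SetLike.val_smul, RingHom.id_apply]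
      rw [mul_smul_comm, mul_smul_comm, smul_add] }
  have hsurj : Function.Surjective T := by
    rintro ⟨f, hf⟩
    rw [hM₃, Submodule.restrictScalars_mem, mem_degreeLT] at hf
    obtain ⟨x, y, hbez⟩ := hbez
    set m := s' * C (s'.leadingCoeff)⁻¹ with hm
    have hmm : m.Monic := monic_mul_C_inv hs'0
    set q := C (s'.leadingCoeff)⁻¹ * ((y * f) /ₘ m) with hq
    have hsq : s' * q = m * ((y * f) /ₘ m) := by rw [hq, hm, mul_assoc]
    set y₂ := (y * f) %ₘ m with hy₂
    have hy₂eq : y₂ = y * f - s' * q := by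
      rw [hsq, hy₂]; exact eq_sub_of_add_eq (modByMonic_add_div _ m)
    set x₂ := x * f + s * q with hx₂
    have hfeq : u * x₂ + v * y₂ = f := by
      rw [hx₂, hy₂eq]
      calc u * (x * f + s * q) + v * (y * f - s' * q)
          = (u * x + v * y) * f + (u * s) * q - (v * s') * q := by noncomm_ring
        _ = f := by rw [hbez, ← hws, ← hws']; noncomm_ring
    have hdy₂ : y₂.degree < (du : WithBot ℕ) := by
      have h1 : y₂.degree < m.degree := degree_modByMonic_lt _ hmm
      have h2 : m.degree = s'.degree :=
        degree_mul_C' (inv_ne_zero (leadingCoeff_ne_zero.mpr hs'0))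
      have h3 : s'.degree ≤ (s'.natDegree : WithBot ℕ) := degree_le_natDegree
      refine lt_of_lt_of_le (h1.trans_eq h2) (le_trans h3 ?_)
      exact_mod_cast Nat.le_of_lt hs'lt
    have hdx₂ : x₂.degree < (dv : WithBot ℕ) := by
      have h1 : u * x₂ = f - v * y₂ := by
        rw [← hfeq]; noncomm_ring
      have h2 : (u * x₂).degree < ((du + dv : ℕ) : WithBot ℕ) := by
        rw [h1]
        refine lt_of_le_of_lt (degree_sub_le _ _) (max_lt hf ?_)
        have := degree_mul_lt_helper (p := v) (dp := dv) degree_le_natDegree hdy₂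
        rw [Nat.add_comm dv du] at this
        exact this
      rcases eq_or_ne x₂ 0 with h0 | h0
      · rw [h0, degree_zero]; exact WithBot.bot_lt_coe _
      · have h3 : (u * x₂).degree = u.degree + x₂.degree := degree_mul
        rw [h3, degree_eq_natDegree hu0] at h2
        have h4 : ((du + dv : ℕ) : WithBot ℕ) = (du : WithBot ℕ) + (dv : WithBot ℕ) := by
          push_cast; rfl
        rw [h4] at h2
        exact lt_of_add_lt_add_left h2
    refine ⟨(⟨x₂, ?_⟩, ⟨y₂, ?_⟩), Subtype.ext hfeq⟩
    · rw [hM₁, Submodule.restrictScalars_mem, mem_degreeLT]; exact hdx₂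
    · rw [hM₂, Submodule.restrictScalars_mem, mem_degreeLT]; exact hdy₂
  have hsmem : s ∈ M₁ := by
    rw [hM₁, Submodule.restrictScalars_mem, mem_degreeLT]
    refine lt_of_le_of_lt (degree_le_natDegree) ?_
    exact_mod_cast hslt
  have hs'mem : -s' ∈ M₂ := by
    rw [hM₂, Submodule.restrictScalars_mem, mem_degreeLT, degree_neg]
    refine lt_of_le_of_lt (degree_le_natDegree) ?_
    exact_mod_cast hs'lt
  set z₀ : M₁ × M₂ := (⟨s, hsmem⟩, ⟨-s', hs'mem⟩) with hz₀
  have hker : T z₀ = 0 := by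
    apply Subtype.ext
    show u * s + v * (-s') = 0
    rw [← hws, mul_neg, ← hws', add_neg_cancel]
  have hz₀ne : z₀ ≠ 0 := by
    intro hcon
    have : (⟨s, hsmem⟩ : M₁) = 0 := congrArg Prod.fst hcon
    exact hs0 (congrArg Subtype.val this)
  have e₁ : M₁ ≃ₗ[ℝ] (Fin dv → ℍ) := (Polynomial.degreeLTEquiv ℍ dv).restrictScalars ℝ
  have e₂ : M₂ ≃ₗ[ℝ] (Fin du → ℍ) := (Polynomial.degreeLTEquiv ℍ du).restrictScalars ℝ
  have e₃ : M₃ ≃ₗ[ℝ] (Fin (du + dv) → ℍ) :=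
    (Polynomial.degreeLTEquiv ℍ (du + dv)).restrictScalars ℝ
  haveI : FiniteDimensional ℝ M₁ := Module.Finite.equiv e₁.symm
  haveI : FiniteDimensional ℝ M₂ := Module.Finite.equiv e₂.symm
  haveI : FiniteDimensional ℝ M₃ := Module.Finite.equiv e₃.symm
  have hfr : ∀ (k : ℕ), Module.finrank ℝ (Fin k → ℍ) = 4 * k := by
    intro k
    rw [Module.finrank_pi_fintype ℝ]
    simp [Quaternion.finrank_eq_four, Nat.mul_comm]
  have hr₁ : Module.finrank ℝ M₁ = 4 * dv := by rw [e₁.finrank_eq, hfr]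
  have hr₂ : Module.finrank ℝ M₂ = 4 * du := by rw [e₂.finrank_eq, hfr]
  have hr₃ : Module.finrank ℝ M₃ = 4 * (du + dv) := by rw [e₃.finrank_eq, hfr]
  have hrn := LinearMap.finrank_range_add_finrank_ker T
  have hrange : LinearMap.range T = ⊤ := LinearMap.range_eq_top.mpr hsurj
  rw [hrange, finrank_top, Module.finrank_prod, hr₁, hr₂, hr₃] at hrn
  have hkfr : Module.finrank ℝ (LinearMap.ker T) = 0 := by omega
  have hkbot : LinearMap.ker T = ⊥ := Submodule.finrank_eq_zero.mp hkfr
  have : z₀ = 0 := by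
    have := LinearMap.mem_ker.mpr hker
    rw [hkbot, Submodule.mem_bot] at this
    exact this
  exact hz₀ne this

lemma monic_list_prod {l : List 𝔻} (h : ∀ p ∈ l, p.Monic) : l.prod.Monic := by
  induction l with
  | nil => simpa using monic_one
  | cons a t ih =>
    rw [List.prod_cons]
    exact (h a List.mem_cons_self).mul (ih fun p hp => h p (List.mem_cons_of_mem _ hp))

lemma normfac_selfconj (c : ℍ) :
    pconj ((X - C c) * (X - C (star c))) = (X - C c) * (X - C (star c)) := by
  rw [pconj_mul, pconj_sub, pconj_sub, pconj_X, pconj_C, pconj_C, star_star]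

lemma Nf_selfconj : ∀ (n : ℕ) (f : Fin n → ℍ),
    pconj (List.ofFn fun i => (X - C (f i)) * (X - C (star (f i)))).prod
      = (List.ofFn fun i => (X - C (f i)) * (X - C (star (f i)))).prod := by
  intro n
  induction n with
  | zero => intro f; simp
  | succ k ih =>
    intro f
    rw [List.ofFn_succ, List.prod_cons, pconj_mul, ih (fun i => f i.succ),
      normfac_selfconj]
    exact (selfconj_comm (normfac_selfconj (f 0)) _).symm

lemma A_mul_pconj : ∀ (n : ℕ) (f : Fin n → ℍ),
    (List.ofFn fun i => X - C (f i)).prod * pconj (List.ofFn fun i => X - C (f i)).prod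
      = (List.ofFn fun i => (X - C (f i)) * (X - C (star (f i)))).prod := by
  intro n
  induction n with
  | zero => intro f; simp
  | succ k ih =>
    intro f
    rw [List.ofFn_succ, List.prod_cons, pconj_mul, List.ofFn_succ (f := fun i =>
      (X - C (f i)) * (X - C (star (f i)))), List.prod_cons]
    have hpc : pconj (X - C (f 0)) = X - C (star (f 0)) := by
      rw [pconj_sub, pconj_X, pconj_C]
    rw [hpc]
    calc (X - C (f 0)) * (List.ofFn fun i => X - C (f i.succ)).prod *
          (pconj (List.ofFn fun i => X - C (f i.succ)).prod * (X - C (star (f 0))))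
        = (X - C (f 0)) * ((List.ofFn fun i => X - C (f i.succ)).prod *
            pconj (List.ofFn fun i => X - C (f i.succ)).prod * (X - C (star (f 0)))) := by
          rw [mul_assoc, mul_assoc]
      _ = (X - C (f 0)) * ((List.ofFn fun i =>
            (X - C (f i.succ)) * (X - C (star (f i.succ)))).prod * (X - C (star (f 0)))) := by
          rw [ih (fun i => f i.succ)]
      _ = (X - C (f 0)) * ((X - C (star (f 0))) * (List.ofFn fun i =>
            (X - C (f i.succ)) * (X - C (star (f i.succ)))).prod) := by
          rw [selfconj_comm (Nf_selfconj k (fun i => f i.succ)) _]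
      _ = (X - C (f 0)) * (X - C (star (f 0))) * (List.ofFn fun i =>
            (X - C (f i.succ)) * (X - C (star (f i.succ)))).prod := by
          rw [mul_assoc]


lemma rmap_def : rmap = Polynomial.mapRingHom (algebraMap ℝ ℍ) := rfl

end Aux

section Main

local notation "ℍ" => Quaternion ℝ
local notation "𝔻" => Polynomial (Quaternion ℝ)

set_option maxHeartbeats 1000000 in
/-- Let Q be a star-one-polynomial with gcd(Q) = 1 (no nonconstant
real polynomial factor) admitting two factorizations
(t−h₁)···(t−hₙ)(s−h)(t−k₁)···(t−kₘ) = (t−h̄₁)···(t−h̄ₙ)(s−h̄)(t−k̄₁)···(t−k̄ₘ)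
with N(t−hᵢ) = N(t−h̄ᵢ) and N(t−kⱼ) = N(t−k̄ⱼ) for all i, j. Then h = h̄ and the
left and right univariate products coincide. (ℍ[t,s] is realized as ℍ[t][s]
with t = C X and s = X.) -/
theorem equivalent_factorizations_agree (n m : ℕ) (h h' : Quaternion ℝ)
    (hs hs' : Fin n → Quaternion ℝ) (ks ks' : Fin m → Quaternion ℝ)
    (Q : Polynomial (Polynomial (Quaternion ℝ)))
    (hfac1 : Q = (List.ofFn fun i => C (X - C (hs i))).prod * (X - C (C h)) *
      (List.ofFn fun j => C (X - C (ks j))).prod)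
    (hfac2 : Q = (List.ofFn fun i => C (X - C (hs' i))).prod * (X - C (C h')) *
      (List.ofFn fun j => C (X - C (ks' j))).prod)
    (hgcd : ∀ r : Polynomial (Polynomial ℝ), toH r ∣ Q → ∃ c : ℝ, r = C (C c))
    (hnormh : ∀ i, (X - C (hs i)) * (X - C (star (hs i))) =
      (X - C (hs' i)) * (X - C (star (hs' i))))
    (hnormk : ∀ j, (X - C (ks j)) * (X - C (star (ks j))) =
      (X - C (ks' j)) * (X - C (star (ks' j)))) :
    h = h' ∧
    (List.ofFn fun i => X - C (hs i)).prod = (List.ofFn fun i => X - C (hs' i)).prod ∧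
    (List.ofFn fun j => X - C (ks j)).prod = (List.ofFn fun j => X - C (ks' j)).prod := by
  set A : 𝔻 := (List.ofFn fun i => X - C (hs i)).prod with hA
  set A' : 𝔻 := (List.ofFn fun i => X - C (hs' i)).prod with hA'
  set B : 𝔻 := (List.ofFn fun j => X - C (ks j)).prod with hB
  set B' : 𝔻 := (List.ofFn fun j => X - C (ks' j)).prod with hB'
  -- Monicity
  have hAm : A.Monic := monic_list_prod (by
    intro p hp; rw [List.mem_ofFn] at hp; obtain ⟨i, rfl⟩ := hp; exact monic_X_sub_C _)
  have hA'm : A'.Monic := monic_list_prod (by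
    intro p hp; rw [List.mem_ofFn] at hp; obtain ⟨i, rfl⟩ := hp; exact monic_X_sub_C _)
  have hBm : B.Monic := monic_list_prod (by
    intro p hp; rw [List.mem_ofFn] at hp; obtain ⟨i, rfl⟩ := hp; exact monic_X_sub_C _)
  have hB'm : B'.Monic := monic_list_prod (by
    intro p hp; rw [List.mem_ofFn] at hp; obtain ⟨i, rfl⟩ := hp; exact monic_X_sub_C _)
  -- Rewrite the factorizations
  have hCA : (List.ofFn fun i => C (X - C (hs i))).prod = Polynomial.C A := by
    rw [hA]
    calc (List.ofFn fun i => C (X - C (hs i))).prod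
        = ((List.ofFn fun i => X - C (hs i)).map C).prod := by rw [List.map_ofFn]; rfl
      _ = Polynomial.C (List.ofFn fun i => X - C (hs i)).prod :=
          (map_list_prod (C : 𝔻 →+* Polynomial 𝔻) _).symm
  have hCA' : (List.ofFn fun i => C (X - C (hs' i))).prod = Polynomial.C A' := by
    rw [hA']
    calc (List.ofFn fun i => C (X - C (hs' i))).prod
        = ((List.ofFn fun i => X - C (hs' i)).map C).prod := by rw [List.map_ofFn]; rfl
      _ = Polynomial.C (List.ofFn fun i => X - C (hs' i)).prod :=
          (map_list_prod (C : 𝔻 →+* Polynomial 𝔻) _).symm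
  have hCB : (List.ofFn fun j => C (X - C (ks j))).prod = Polynomial.C B := by
    rw [hB]
    calc (List.ofFn fun j => C (X - C (ks j))).prod
        = ((List.ofFn fun j => X - C (ks j)).map C).prod := by rw [List.map_ofFn]; rfl
      _ = Polynomial.C (List.ofFn fun j => X - C (ks j)).prod :=
          (map_list_prod (C : 𝔻 →+* Polynomial 𝔻) _).symm
  have hCB' : (List.ofFn fun j => C (X - C (ks' j))).prod = Polynomial.C B' := by
    rw [hB']
    calc (List.ofFn fun j => C (X - C (ks' j))).prod
        = ((List.ofFn fun j => X - C (ks' j)).map C).prod := by rw [List.map_ofFn]; rfl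
      _ = Polynomial.C (List.ofFn fun j => X - C (ks' j)).prod :=
          (map_list_prod (C : 𝔻 →+* Polynomial 𝔻) _).symm
  have expand : ∀ (a b : 𝔻) (c : ℍ),
      Polynomial.C a * (X - Polynomial.C (Polynomial.C c)) * Polynomial.C b
        = Polynomial.C (a * b) * X - Polynomial.C (a * Polynomial.C c * b) := by
    intro a b c
    rw [mul_sub, sub_mul, mul_assoc (Polynomial.C a) X (Polynomial.C b), X_mul,
      ← mul_assoc, ← Polynomial.C_mul, ← Polynomial.C_mul, ← Polynomial.C_mul]
  have hQ1 : Q = Polynomial.C (A * B) * X - Polynomial.C (A * Polynomial.C h * B) := by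
    rw [hfac1, hCA, hCB, expand]
  have hQ2 : Q = Polynomial.C (A' * B') * X - Polynomial.C (A' * Polynomial.C h' * B') := by
    rw [hfac2, hCA', hCB', expand]
  have hQQ := hQ1.symm.trans hQ2
  have E1 : A * B = A' * B' := by
    have := congrArg (fun p => Polynomial.coeff p 1) hQQ
    simpa [coeff_sub, coeff_C_mul, coeff_C] using this
  have E2 : A * Polynomial.C h * B = A' * Polynomial.C h' * B' := by
    have := congrArg (fun p => Polynomial.coeff p 0) hQQ
    simpa [coeff_sub, coeff_C_mul, coeff_C] using this
  -- the left norms agree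
  have hν : A * pconj A = A' * pconj A' := by
    rw [hA, hA', A_mul_pconj, A_mul_pconj]
    congr 1
    exact congrArg List.ofFn (funext hnormh)
  -- greatest common left divisor of A and A'
  set P₁ : 𝔻 → Prop := fun f => ∃ x y, f = A * x + A' * y with hP₁
  obtain ⟨g, hgm, hgP, hgdvd⟩ := exists_monic_gen P₁
    (by rintro f f' ⟨x, y, rfl⟩ ⟨x', y', rfl⟩
        exact ⟨x - x', y - y', by noncomm_ring⟩)
    (by rintro f c ⟨x, y, rfl⟩
        exact ⟨x * c, y * c, by noncomm_ring⟩)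
    hAm.ne_zero ⟨1, 0, by simp⟩
  obtain ⟨u, hu⟩ := hgdvd A ⟨1, 0, by simp⟩
  obtain ⟨v, hv⟩ := hgdvd A' ⟨0, 1, by simp⟩
  have hg0 : g ≠ 0 := hgm.ne_zero
  have hum : u.Monic := by
    have := hAm
    rw [hu, Polynomial.Monic, leadingCoeff_mul, hgm.leadingCoeff, one_mul] at this
    exact this
  have hvm : v.Monic := by
    have := hA'm
    rw [hv, Polynomial.Monic, leadingCoeff_mul, hgm.leadingCoeff, one_mul] at this
    exact this
  -- Bezout for u, v
  obtain ⟨x, y, hgxy⟩ := hgP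
  have hbez : u * x + v * y = 1 := by
    apply mul_left_cancel₀ hg0
    rw [mul_add, ← mul_assoc, ← hu, ← mul_assoc, ← hv, ← hgxy, mul_one]
  -- common norm of u and v
  set η := u * pconj u with hηdef
  clear_value η
  have hη : u * pconj u = v * pconj v := by
    have h1 : g * (u * pconj u * pconj g) = g * (v * pconj v * pconj g) := by
      have := hν
      rw [hu, hv, pconj_mul, pconj_mul] at this
      calc g * (u * pconj u * pconj g) = g * u * (pconj u * pconj g) := by noncomm_ring
        _ = g * v * (pconj v * pconj g) := this
        _ = g * (v * pconj v * pconj g) := by noncomm_ring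
    have h2 := mul_left_cancel₀ hg0 h1
    exact mul_right_cancel₀ (pconj_ne_zero hg0) h2
  have hη0 : η ≠ 0 := by
    rw [hηdef]; exact mul_ne_zero hum.ne_zero (pconj_ne_zero hum.ne_zero)
  -- cancel g in the two equations
  have E1g : u * B = v * B' := by
    apply mul_left_cancel₀ hg0
    rw [← mul_assoc, ← hu, ← mul_assoc, ← hv]; exact E1
  have E2g : u * (Polynomial.C h * B) = v * (Polynomial.C h' * B') := by
    apply mul_left_cancel₀ hg0
    calc g * (u * (Polynomial.C h * B)) = g * u * Polynomial.C h * B := by noncomm_ring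
      _ = A' * Polynomial.C h' * B' := by rw [← hu]; exact E2
      _ = g * (v * (Polynomial.C h' * B')) := by rw [hv]; noncomm_ring
  -- least common left multiple of u and v
  set P₂ : 𝔻 → Prop := fun f => (∃ x, f = u * x) ∧ (∃ y, f = v * y) with hP₂
  obtain ⟨w, hwm, ⟨⟨s₀, hws₀⟩, ⟨s₀', hws₀'⟩⟩, hwdvd⟩ := exists_monic_gen P₂
    (by rintro f f' ⟨⟨x₁, rfl⟩, ⟨y₁, hy₁⟩⟩ ⟨⟨x₂, hx₂⟩, ⟨y₂, hy₂⟩⟩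
        exact ⟨⟨x₁ - x₂, by rw [hx₂]; noncomm_ring⟩,
               ⟨y₁ - y₂, by rw [hy₁, hy₂]; noncomm_ring⟩⟩)
    (by rintro f c ⟨⟨x₁, rfl⟩, ⟨y₁, hy₁⟩⟩
        exact ⟨⟨x₁ * c, by noncomm_ring⟩, ⟨y₁ * c, by rw [hy₁]; noncomm_ring⟩⟩)
    hη0 ⟨⟨pconj u, hηdef⟩, ⟨pconj v, hηdef.trans hη⟩⟩
  obtain ⟨c₁, hc₁⟩ := hwdvd (u * B) ⟨⟨B, rfl⟩, ⟨B', E1g⟩⟩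
  obtain ⟨c₂, hc₂⟩ := hwdvd (u * (Polynomial.C h * B)) ⟨⟨_, rfl⟩, ⟨_, E2g⟩⟩
  obtain ⟨z, hz⟩ := hwdvd η ⟨⟨pconj u, hηdef⟩, ⟨pconj v, hηdef.trans hη⟩⟩
  have hz0 : z ≠ 0 := by rintro rfl; rw [mul_zero] at hz; exact hη0 hz
  -- degree bookkeeping: z is a nonzero constant
  have hldeg : u.natDegree + v.natDegree ≤ w.natDegree :=
    lcm_deg hum hvm ⟨x, y, hbez⟩ hwm.ne_zero hws₀ hws₀'
  have hndη : η.natDegree = u.natDegree + v.natDegree := by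
    have h1 : η.natDegree = u.natDegree + u.natDegree := by
      rw [hηdef, natDegree_mul hum.ne_zero (pconj_ne_zero hum.ne_zero), natDegree_pconj]
    have h2 : η.natDegree = v.natDegree + v.natDegree := by
      rw [hηdef, hη, natDegree_mul hvm.ne_zero (pconj_ne_zero hvm.ne_zero), natDegree_pconj]
    omega
  have hndz : z.natDegree = 0 := by
    have h3 : η.natDegree = w.natDegree + z.natDegree := by
      rw [hz, natDegree_mul hwm.ne_zero hz0]
    omega
  obtain ⟨z₀, hz₀⟩ : ∃ c : ℍ, z = Polynomial.C c := ⟨z.coeff 0, eq_C_of_natDegree_eq_zero hndz⟩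
  have hz₀0 : z₀ ≠ 0 := by rintro rfl; rw [Polynomial.C_0] at hz₀; exact hz0 hz₀
  have hwη : w = η * Polynomial.C z₀⁻¹ := by
    rw [hz, hz₀, mul_assoc, ← Polynomial.C_mul, mul_inv_cancel₀ hz₀0, Polynomial.C_1, mul_one]
  -- η is real; it divides both coefficients of Q
  have hηsc : pconj η = η := by
    rw [hηdef, pconj_mul, pconj_pconj]
  obtain ⟨ηr, hηr⟩ := exists_real hηsc
  have hAB : A * B = η * (g * (Polynomial.C z₀⁻¹ * c₁)) := by
    calc A * B = g * (u * B) := by rw [hu, mul_assoc]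
      _ = g * (η * (Polynomial.C z₀⁻¹ * c₁)) := by rw [hc₁, hwη, mul_assoc]
      _ = η * (g * (Polynomial.C z₀⁻¹ * c₁)) := by
          rw [← mul_assoc, ← selfconj_comm hηsc g, mul_assoc]
  have hAhB : A * Polynomial.C h * B = η * (g * (Polynomial.C z₀⁻¹ * c₂)) := by
    calc A * Polynomial.C h * B = g * (u * (Polynomial.C h * B)) := by
          rw [hu]; noncomm_ring
      _ = g * (η * (Polynomial.C z₀⁻¹ * c₂)) := by rw [hc₂, hwη, mul_assoc]
      _ = η * (g * (Polynomial.C z₀⁻¹ * c₂)) := by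
          rw [← mul_assoc, ← selfconj_comm hηsc g, mul_assoc]
  have hdvd : toH (Polynomial.C ηr) ∣ Q := by
    refine ⟨Polynomial.C (g * (Polynomial.C z₀⁻¹ * c₁)) * X
      - Polynomial.C (g * (Polynomial.C z₀⁻¹ * c₂)), ?_⟩
    have htoH : toH (Polynomial.C ηr) = Polynomial.C η := by
      show (Polynomial.mapRingHom (Polynomial.mapRingHom (algebraMap ℝ ℍ)))
        (Polynomial.C ηr) = Polynomial.C η
      rw [coe_mapRingHom, Polynomial.map_C]
      exact congrArg Polynomial.C hηr
    have hsplit : ∀ G : 𝔻, Polynomial.C (η * G) = Polynomial.C η * Polynomial.C G :=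
      fun G => Polynomial.C_mul
    rw [htoH, hQ1, hAB, hAhB, hsplit, hsplit, mul_sub, mul_assoc]
  obtain ⟨c₀, hc₀⟩ := hgcd _ hdvd
  have hηc : η = Polynomial.C (algebraMap ℝ ℍ c₀) := by
    have : ηr = Polynomial.C c₀ := Polynomial.C_injective hc₀
    rw [← hηr, this, rmap_def]
    exact Polynomial.map_C _
  have hndη0 : η.natDegree = 0 := by rw [hηc]; exact natDegree_C _
  have hndu : u.natDegree = 0 := by omega
  have hndv : v.natDegree = 0 := by omega
  have hu1 : u = 1 := by
    have h₀ := eq_C_of_natDegree_eq_zero hndu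
    have hlc : u.coeff 0 = 1 := by
      have := hum
      rw [Polynomial.Monic, Polynomial.leadingCoeff, hndu] at this
      exact this
    rw [h₀, hlc, Polynomial.C_1]
  have hv1 : v = 1 := by
    have h₀ := eq_C_of_natDegree_eq_zero hndv
    have hlc : v.coeff 0 = 1 := by
      have := hvm
      rw [Polynomial.Monic, Polynomial.leadingCoeff, hndv] at this
      exact this
    rw [h₀, hlc, Polynomial.C_1]
  -- conclude
  have hAA' : A = A' := by rw [hu, hv, hu1, hv1]
  have hBB' : B = B' := by
    have := E1g
    rw [hu1, hv1, one_mul, one_mul] at this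
    exact this
  have hhh' : h = h' := by
    have h1 := E2g
    rw [hu1, hv1, one_mul, one_mul, ← hBB'] at h1
    have h2 : Polynomial.C h = Polynomial.C h' := mul_right_cancel₀ hBm.ne_zero h1
    exact Polynomial.C_injective h2
  exact ⟨hhh', hAA', hBB'⟩


end Main
end
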